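/- arXiv:2103.06204 — 3 statements merged into one kernel-verified Lean document; each statement's English description precedes it below -/
import Mathlib

section
/- Let the partition be λ-quasi-uniform and let κ : [0,1] → ℝ be measurable with 0 < m ≤ κ(x) ≤ M for all x ∈ [0,1]. Then the error estimator E_h of Babuška–Rheinboldt type satisfies the two-sided bound (λ m² / (6 (1+λ)³ M²)) · J(u_h)² ≤ E_h² ≤ (2 λ² M² / (3 (1+λ) m²)) · J(u_h)². -/
open MeasureTheory intervalIntegral

/-- Size `h_j = x_j − x_{j−1}` of the `j`-th element of the partition with nodes `x`. -/
def msize (x : ℕ → ℝ) (j : ℕ) : ℝ := x j - x (j - 1)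

/-- `h̄_i = min{h_i, h_{i+1}}`, the minimum of the two element sizes adjacent to node `i`. -/
def mbar (x : ℕ → ℝ) (i : ℕ) : ℝ := min (msize x i) (msize x (i + 1))

/-- Jump `[u_h']_{x_i} = s_i − s_{i+1}` of the derivative at the internal node `i`;
zero at the boundary nodes. -/
def mjump (N : ℕ) (s : ℕ → ℝ) (i : ℕ) : ℝ := if 1 ≤ i ∧ i < N then s i - s (i + 1) else 0

/-- Squared jump functional `J(u_h)² = Σ_{i=1}^{N−1} h̄_i [u_h']_{x_i}²`. -/
def Jsq (N : ℕ) (x s : ℕ → ℝ) : ℝ :=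
  ∑ i ∈ Finset.Icc 1 (N - 1), mbar x i * mjump N s i ^ 2

/-- `τ_{j,k} = (h_j/(h_{j−k+1} + h_{j−k})) [u_h']_{x_{j−k}} κ(x_{j−k})`, with the
convention that terms involving boundary jumps vanish. -/
noncomputable def tauBR (N : ℕ) (x : ℕ → ℝ) (κ : ℝ → ℝ) (s : ℕ → ℝ) (j k : ℕ) : ℝ :=
  msize x j / (msize x (j - k + 1) + msize x (j - k)) * mjump N s (j - k) * κ (x (j - k))

open Finset

/-! On each element `ℓ_j` is affine with end values `a = τ_{j,1}` and `-b = -τ_{j,0}`, so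
`∫_{K_j} ℓ_j² = h_j (a² - ab + b²)/3` lies between `h_j (a² + b²)/6` and `h_j (a² + b²)/2`;
with `m ≤ κ ≤ M` this compares `η_j²` with `h_j (τ_{j,1}² + τ_{j,0}²)`. Regrouped by nodes,
the node `x_i` contributes `([u_h']_{x_i} κ(x_i))² (h_i³ + h_{i+1}³)/(h_i + h_{i+1})²`, and this
weight lies between `h̄_i/2` and, on a λ-quasi-uniform partition, `λ² h̄_i/(1 + λ)`. -/

lemma integral_affine_sq (c d p q : ℝ) :
    ∫ t in p..q, (c * t + d) ^ 2 =
      (q - p) * ((c * p + d) ^ 2 + (c * p + d) * (c * q + d) + (c * q + d) ^ 2) / 3 := by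
  have hderiv : ∀ t ∈ Set.uIcc p q,
      HasDerivAt (fun t => c ^ 2 / 3 * t ^ 3 + c * d * t ^ 2 + d ^ 2 * t) ((c * t + d) ^ 2) t :=
    fun t _ => ((((hasDerivAt_pow 3 t).const_mul (c ^ 2 / 3)).add
      ((hasDerivAt_pow 2 t).const_mul (c * d))).add
        ((hasDerivAt_id t).const_mul (d ^ 2))).congr_deriv (by push_cast; ring)
  rw [integral_eq_sub_of_hasDerivAt hderiv (Continuous.intervalIntegrable (by fun_prop) p q)]
  ring

lemma sq_div_le_sq_div_of_le {a k m : ℝ} (hm : 0 < m) (hk : m ≤ k) :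
    (a / k) ^ 2 ≤ a ^ 2 / m ^ 2 := by
  rw [div_pow]
  exact div_le_div_of_nonneg_left (sq_nonneg a) (by positivity) (pow_le_pow_left₀ hm.le hk 2)

section WeightedIntegral

variable {g κ : ℝ → ℝ} {m M p q : ℝ}

lemma intervalIntegrable_sq_div (hg : Continuous g) (hκ : Measurable κ) (hm : 0 < m)
    (hpq : p ≤ q) (hκm : ∀ t ∈ Set.Icc p q, m ≤ κ t) :
    IntervalIntegrable (fun t => (g t / κ t) ^ 2) volume p q := by
  have hdom : Continuous fun t => g t ^ 2 / m ^ 2 := by fun_prop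
  refine (hdom.intervalIntegrable p q).mono_fun'
    ((hg.measurable.div hκ).pow_const 2).aestronglyMeasurable ?_
  rw [Set.uIoc_of_le hpq]
  refine (ae_restrict_iff' measurableSet_Ioc).2 (Filter.Eventually.of_forall fun t ht => ?_)
  show ‖(g t / κ t) ^ 2‖ ≤ g t ^ 2 / m ^ 2
  rw [Real.norm_eq_abs, abs_sq]
  exact sq_div_le_sq_div_of_le hm (hκm t (Set.Ioc_subset_Icc_self ht))

lemma integral_sq_div_le (hg : Continuous g) (hκ : Measurable κ) (hm : 0 < m)
    (hpq : p ≤ q) (hκm : ∀ t ∈ Set.Icc p q, m ≤ κ t) :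
    ∫ t in p..q, (g t / κ t) ^ 2 ≤ (∫ t in p..q, g t ^ 2) / m ^ 2 := by
  rw [← intervalIntegral.integral_div]
  exact intervalIntegral.integral_mono_on hpq (intervalIntegrable_sq_div hg hκ hm hpq hκm)
    (Continuous.intervalIntegrable (by fun_prop) p q)
    fun t ht => sq_div_le_sq_div_of_le hm (hκm t ht)

lemma div_le_integral_sq_div (hg : Continuous g) (hκ : Measurable κ) (hm : 0 < m)
    (hpq : p ≤ q) (hκb : ∀ t ∈ Set.Icc p q, m ≤ κ t ∧ κ t ≤ M) :
    (∫ t in p..q, g t ^ 2) / M ^ 2 ≤ ∫ t in p..q, (g t / κ t) ^ 2 := by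
  rw [← intervalIntegral.integral_div]
  refine intervalIntegral.integral_mono_on hpq (Continuous.intervalIntegrable (by fun_prop) p q)
    (intervalIntegrable_sq_div hg hκ hm hpq fun t ht => (hκb t ht).1) fun t ht => ?_
  obtain ⟨hmk, hkM⟩ := hκb t ht
  rw [div_pow]
  exact div_le_div_of_nonneg_left (sq_nonneg _) (pow_pos (hm.trans_le hmk) 2)
    (pow_le_pow_left₀ (hm.le.trans hmk) hkM 2)

end WeightedIntegral

lemma integral_affine_div_sq_bounds {ℓ κ : ℝ → ℝ} {m M p q a b : ℝ}
    (hℓ : ∃ c d : ℝ, ∀ t, ℓ t = c * t + d) (hp : ℓ p = a) (hq : ℓ q = -b) (hpq : p ≤ q)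
    (hκ : Measurable κ) (hm : 0 < m) (hκb : ∀ t ∈ Set.Icc p q, m ≤ κ t ∧ κ t ≤ M) :
    (q - p) * (a ^ 2 + b ^ 2) / (6 * M ^ 2) ≤ ∫ t in p..q, (ℓ t / κ t) ^ 2 ∧
      ∫ t in p..q, (ℓ t / κ t) ^ 2 ≤ (q - p) * (a ^ 2 + b ^ 2) / (2 * m ^ 2) := by
  obtain ⟨c, d, hcd⟩ := hℓ
  simp only [hcd] at hp hq ⊢
  have hI := integral_affine_sq c d p q
  rw [hp, hq] at hI
  have hlen := sub_nonneg.2 hpq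
  have hlow : (q - p) * (a ^ 2 + b ^ 2) / 6 ≤ ∫ t in p..q, (c * t + d) ^ 2 := by
    rw [hI]; nlinarith [mul_nonneg hlen (sq_nonneg (a - b))]
  have hup : ∫ t in p..q, (c * t + d) ^ 2 ≤ (q - p) * (a ^ 2 + b ^ 2) / 2 := by
    rw [hI]; nlinarith [mul_nonneg hlen (sq_nonneg (a + b))]
  have hM : 0 < M := hm.trans_le ((hκb p ⟨le_rfl, hpq⟩).1.trans (hκb p ⟨le_rfl, hpq⟩).2)
  constructor
  · calc (q - p) * (a ^ 2 + b ^ 2) / (6 * M ^ 2)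
        = (q - p) * (a ^ 2 + b ^ 2) / 6 / M ^ 2 := by rw [div_div, mul_comm 6]
      _ ≤ (∫ t in p..q, (c * t + d) ^ 2) / M ^ 2 := by gcongr
      _ ≤ _ := div_le_integral_sq_div (by fun_prop) hκ hm hpq hκb
  · calc _ ≤ (∫ t in p..q, (c * t + d) ^ 2) / m ^ 2 :=
          integral_sq_div_le (by fun_prop) hκ hm hpq fun t ht => (hκb t ht).1
      _ ≤ (q - p) * (a ^ 2 + b ^ 2) / 2 / m ^ 2 := by gcongr
      _ = (q - p) * (a ^ 2 + b ^ 2) / (2 * m ^ 2) := by rw [div_div]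

lemma min_div_two_le_cube_add_cube_div_sq {a b : ℝ} (ha : 0 < a) (hb : 0 < b) :
    min a b / 2 ≤ (a ^ 3 + b ^ 3) / (a + b) ^ 2 := by
  rw [div_le_div_iff₀ two_pos (by positivity)]
  rcases le_total a b with h | h
  · rw [min_eq_left h]
    nlinarith [mul_nonneg (mul_nonneg (sub_nonneg.2 h) (by linarith : 0 ≤ 2 * b - a))
      (add_pos ha hb).le]
  · rw [min_eq_right h]
    nlinarith [mul_nonneg (mul_nonneg (sub_nonneg.2 h) (by linarith : 0 ≤ 2 * a - b))
      (add_pos ha hb).le]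

lemma cube_add_cube_div_sq_le {a b lam : ℝ} (ha : 0 < a) (hb : 0 < b) (hlam : 1 ≤ lam)
    (hba : b ≤ lam * a) (hab : a ≤ lam * b) :
    (a ^ 3 + b ^ 3) / (a + b) ^ 2 ≤ lam ^ 2 * min a b / (1 + lam) := by
  rw [div_le_div_iff₀ (by positivity) (by linarith)]
  rcases le_total a b with h | h
  · rw [min_eq_left h]
    nlinarith [mul_nonneg (mul_nonneg (sub_nonneg.2 h) (sub_nonneg.2 hba)) ha.le,
      mul_nonneg (mul_nonneg (sub_nonneg.2 h) (sub_nonneg.2 hba)) hb.le,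
      mul_nonneg (mul_nonneg (sub_nonneg.2 hba) ha.le) hb.le,
      mul_nonneg (mul_nonneg (sub_nonneg.2 hba) ha.le) ha.le, mul_pos ha hb]
  · rw [min_eq_right h]
    nlinarith [mul_nonneg (mul_nonneg (sub_nonneg.2 h) (sub_nonneg.2 hab)) hb.le,
      mul_nonneg (mul_nonneg (sub_nonneg.2 h) (sub_nonneg.2 hab)) ha.le,
      mul_nonneg (mul_nonneg (sub_nonneg.2 hab) hb.le) ha.le,
      mul_nonneg (mul_nonneg (sub_nonneg.2 hab) hb.le) hb.le, mul_pos ha hb]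

lemma sum_Icc_add_eq_sum_Icc_pred {M : Type*} [AddCommMonoid M] (N : ℕ) (f g : ℕ → M)
    (hf : f 1 = 0) (hg : g N = 0) :
    ∑ j ∈ Icc 1 N, (f j + g j) = ∑ i ∈ Icc 1 (N - 1), (f (i + 1) + g i) := by
  rcases N with _ | n
  · simp
  rw [sum_add_distrib, sum_add_distrib, sum_Icc_succ_top (f := g) (by omega), hg, add_zero,
    Nat.add_sub_cancel, Icc_eq_cons_Ioc (by omega), sum_cons, hf, zero_add,
    ← Icc_add_one_left_eq_Ioc, ← map_add_right_Icc, sum_map]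
  rfl

section Partition

variable {N : ℕ} {x : ℕ → ℝ}

lemma msize_pos (hmono : ∀ i < N, x i < x (i + 1)) {j : ℕ} (hj₁ : 1 ≤ j) (hj : j ≤ N) :
    0 < msize x j :=
  sub_pos.2 <| strictMonoOn_Iic_of_lt_succ (ψ := x) hmono (by simp; omega) (Set.mem_Iic.2 hj)
    (by omega)

lemma mem_Icc_of_le (hx0 : x 0 = 0) (hxN : x N = 1) (hmono : ∀ i < N, x i < x (i + 1))
    {i : ℕ} (hi : i ≤ N) : x i ∈ Set.Icc (0 : ℝ) 1 := by
  have h := (strictMonoOn_Iic_of_lt_succ (ψ := x) hmono).monotoneOn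
  exact ⟨hx0 ▸ h (by simp) hi (Nat.zero_le i), hxN ▸ h hi (Set.mem_Iic.2 le_rfl) hi⟩

lemma Jsq_nonneg (hmono : ∀ i < N, x i < x (i + 1)) (s : ℕ → ℝ) : 0 ≤ Jsq N x s :=
  sum_nonneg fun i hi => by
    obtain ⟨hi1, hiN⟩ := mem_Icc.1 hi
    have ha := msize_pos hmono hi1 (by omega)
    have hb := msize_pos hmono (j := i + 1) (by omega) (by omega)
    exact mul_nonneg (le_min ha.le hb.le) (sq_nonneg _)

noncomputable def tauEnergy (N : ℕ) (x : ℕ → ℝ) (κ : ℝ → ℝ) (s : ℕ → ℝ) : ℝ :=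
  ∑ j ∈ Icc 1 N, msize x j * (tauBR N x κ s j 1 ^ 2 + tauBR N x κ s j 0 ^ 2)

lemma tauEnergy_eq_sum_nodes (κ : ℝ → ℝ) (s : ℕ → ℝ) :
    tauEnergy N x κ s = ∑ i ∈ Icc 1 (N - 1),
      (msize x i ^ 3 + msize x (i + 1) ^ 3) / (msize x i + msize x (i + 1)) ^ 2 *
        (mjump N s i * κ (x i)) ^ 2 := by
  unfold tauEnergy
  simp only [mul_add]
  rw [sum_Icc_add_eq_sum_Icc_pred N _ _ (by simp [tauBR, mjump]) (by simp [tauBR, mjump])]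
  refine sum_congr rfl fun i _ => ?_
  simp only [tauBR, Nat.add_sub_cancel, Nat.sub_zero, mul_pow, div_pow]
  ring

lemma sq_div_two_mul_Jsq_le_tauEnergy (hmono : ∀ i < N, x i < x (i + 1)) {κ : ℝ → ℝ} {m : ℝ}
    (hm : 0 ≤ m) (hκ : ∀ i ∈ Icc 1 (N - 1), m ≤ κ (x i)) (s : ℕ → ℝ) :
    m ^ 2 / 2 * Jsq N x s ≤ tauEnergy N x κ s := by
  rw [tauEnergy_eq_sum_nodes, Jsq, mul_sum]
  refine sum_le_sum fun i hi => ?_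
  obtain ⟨hi1, hiN⟩ := mem_Icc.1 hi
  have ha := msize_pos hmono hi1 (by omega)
  have hb := msize_pos hmono (j := i + 1) (by omega) (by omega)
  calc m ^ 2 / 2 * (mbar x i * mjump N s i ^ 2)
      = mjump N s i ^ 2 * (m ^ 2 * (min (msize x i) (msize x (i + 1)) / 2)) := by
        rw [mbar]; ring
    _ ≤ mjump N s i ^ 2 * (κ (x i) ^ 2 *
          ((msize x i ^ 3 + msize x (i + 1) ^ 3) / (msize x i + msize x (i + 1)) ^ 2)) := by
        refine mul_le_mul_of_nonneg_left (mul_le_mul (pow_le_pow_left₀ hm (hκ i hi) 2)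
          (min_div_two_le_cube_add_cube_div_sq ha hb) ?_ (sq_nonneg _)) (sq_nonneg _)
        exact div_nonneg (le_min ha.le hb.le) zero_le_two
    _ = _ := by ring

lemma tauEnergy_le_mul_Jsq (hmono : ∀ i < N, x i < x (i + 1)) {lam : ℝ} (hlam : 1 ≤ lam)
    (hquasi : ∀ j, 2 ≤ j → j ≤ N →
      1 / lam ≤ msize x j / msize x (j - 1) ∧ msize x j / msize x (j - 1) ≤ lam)
    {κ : ℝ → ℝ} {M : ℝ} (hκ : ∀ i ∈ Icc 1 (N - 1), 0 ≤ κ (x i) ∧ κ (x i) ≤ M) (s : ℕ → ℝ) :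
    tauEnergy N x κ s ≤ lam ^ 2 * M ^ 2 / (1 + lam) * Jsq N x s := by
  rw [tauEnergy_eq_sum_nodes, Jsq, mul_sum]
  refine sum_le_sum fun i hi => ?_
  obtain ⟨hi1, hiN⟩ := mem_Icc.1 hi
  have ha := msize_pos hmono hi1 (by omega)
  have hb := msize_pos hmono (j := i + 1) (by omega) (by omega)
  obtain ⟨hq1, hq2⟩ := hquasi (i + 1) (by omega) (by omega)
  rw [Nat.add_sub_cancel] at hq1 hq2
  rw [div_le_div_iff₀ (by linarith) ha, one_mul] at hq1
  rw [div_le_iff₀ ha] at hq2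
  obtain ⟨hκ0, hκM⟩ := hκ i hi
  calc _ = mjump N s i ^ 2 * (κ (x i) ^ 2 *
          ((msize x i ^ 3 + msize x (i + 1) ^ 3) / (msize x i + msize x (i + 1)) ^ 2)) := by ring
    _ ≤ mjump N s i ^ 2 * (M ^ 2 * (lam ^ 2 * min (msize x i) (msize x (i + 1)) / (1 + lam))) := by
        refine mul_le_mul_of_nonneg_left (mul_le_mul (pow_le_pow_left₀ hκ0 hκM 2)
          (cube_add_cube_div_sq_le ha hb hlam (by linarith) (by linarith)) (by positivity)
          (sq_nonneg _)) (sq_nonneg _)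
    _ = lam ^ 2 * M ^ 2 / (1 + lam) * (mbar x i * mjump N s i ^ 2) := by rw [mbar]; ring

lemma tauEnergy_div_le_estimator_le (hx0 : x 0 = 0) (hxN : x N = 1)
    (hmono : ∀ i < N, x i < x (i + 1)) {κ : ℝ → ℝ} (hκmeas : Measurable κ) {m M : ℝ}
    (hm : 0 < m) (hκ : ∀ t ∈ Set.Icc (0 : ℝ) 1, m ≤ κ t ∧ κ t ≤ M) {ℓ : ℕ → ℝ → ℝ}
    (hℓaff : ∀ j, ∃ c d : ℝ, ∀ t : ℝ, ℓ j t = c * t + d) (s : ℕ → ℝ)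
    (hℓval : ∀ j, 1 ≤ j → j ≤ N →
      ℓ j (x (j - 1)) = tauBR N x κ s j 1 ∧ ℓ j (x j) = -tauBR N x κ s j 0) :
    tauEnergy N x κ s / (6 * M ^ 2) ≤
        ∑ j ∈ Icc 1 N, ∫ t in (x (j - 1))..(x j), (ℓ j t / κ t) ^ 2 ∧
      ∑ j ∈ Icc 1 N, ∫ t in (x (j - 1))..(x j), (ℓ j t / κ t) ^ 2 ≤
        tauEnergy N x κ s / (2 * m ^ 2) := by
  have hel : ∀ j ∈ Icc 1 N, _ := fun j hj => by
    obtain ⟨hj1, hjN⟩ := mem_Icc.1 hj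
    obtain ⟨hp, hq⟩ := hℓval j hj1 hjN
    exact integral_affine_div_sq_bounds (hℓaff j) hp hq
      (sub_nonneg.1 (msize_pos hmono hj1 hjN).le) hκmeas hm fun t ht => hκ t <|
        Set.Icc_subset_Icc (mem_Icc_of_le hx0 hxN hmono (i := j - 1) (by omega)).1
          (mem_Icc_of_le hx0 hxN hmono hjN).2 ht
  unfold tauEnergy
  rw [sum_div, sum_div]
  exact ⟨sum_le_sum fun j hj => (hel j hj).1, sum_le_sum fun j hj => (hel j hj).2⟩

end Partition

theorem stmt0_general (N : ℕ) (x : ℕ → ℝ) (hx0 : x 0 = 0) (hxN : x N = 1)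
    (hmono : ∀ i < N, x i < x (i + 1)) (lam : ℝ) (hlam : 1 < lam)
    (hquasi : ∀ j, 2 ≤ j → j ≤ N →
      1 / lam ≤ msize x j / msize x (j - 1) ∧ msize x j / msize x (j - 1) ≤ lam)
    (κ : ℝ → ℝ) (hκmeas : Measurable κ) (m M : ℝ) (hm : 0 < m)
    (hκ : ∀ t ∈ Set.Icc (0 : ℝ) 1, m ≤ κ t ∧ κ t ≤ M)
    (s : ℕ → ℝ)
    (ℓ : ℕ → ℝ → ℝ) (hℓaff : ∀ j, ∃ c d : ℝ, ∀ t : ℝ, ℓ j t = c * t + d)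
    (hℓval : ∀ j, 1 ≤ j → j ≤ N →
      ℓ j (x (j - 1)) = tauBR N x κ s j 1 ∧ ℓ j (x j) = -tauBR N x κ s j 0) :
    lam * m ^ 2 / (6 * (1 + lam) ^ 3 * M ^ 2) * Jsq N x s ≤
      (∑ j ∈ Finset.Icc 1 N, ∫ t in (x (j - 1))..(x j), (ℓ j t / κ t) ^ 2) ∧
    (∑ j ∈ Finset.Icc 1 N, ∫ t in (x (j - 1))..(x j), (ℓ j t / κ t) ^ 2) ≤
      2 * lam ^ 2 * M ^ 2 / (3 * (1 + lam) * m ^ 2) * Jsq N x s := by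
  have hκnode : ∀ i ∈ Icc 1 (N - 1), m ≤ κ (x i) ∧ κ (x i) ≤ M := fun i hi =>
    hκ _ (mem_Icc_of_le hx0 hxN hmono (by have := (mem_Icc.1 hi).2; omega))
  have hJ := Jsq_nonneg hmono s
  have hlow := sq_div_two_mul_Jsq_le_tauEnergy hmono hm.le (fun i hi => (hκnode i hi).1) s
  have hup := tauEnergy_le_mul_Jsq hmono hlam.le hquasi
    (fun i hi => ⟨hm.le.trans (hκnode i hi).1, (hκnode i hi).2⟩) s
  obtain ⟨hElow, hEup⟩ := tauEnergy_div_le_estimator_le hx0 hxN hmono hκmeas hm hκ hℓaff s hℓval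
  obtain ⟨hm0, h0M⟩ := hκ 0 ⟨le_rfl, zero_le_one⟩
  have hM : 0 < M := hm.trans_le (hm0.trans h0M)
  have hlowc : lam * m ^ 2 / (6 * (1 + lam) ^ 3 * M ^ 2) ≤ m ^ 2 / 2 / (6 * M ^ 2) := by
    have hcube : 2 * lam ≤ (1 + lam) ^ 3 := by nlinarith [sq_nonneg lam]
    rw [div_div, div_le_div_iff₀ (by positivity) (by positivity)]
    nlinarith [mul_le_mul_of_nonneg_left hcube (by positivity : 0 ≤ 6 * m ^ 2 * M ^ 2)]
  have hupc : lam ^ 2 * M ^ 2 / (1 + lam) / (2 * m ^ 2) ≤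
      2 * lam ^ 2 * M ^ 2 / (3 * (1 + lam) * m ^ 2) := by
    rw [div_div, div_le_div_iff₀ (by positivity) (by positivity)]
    nlinarith [(by positivity : 0 ≤ lam ^ 2 * M ^ 2 * (1 + lam) * m ^ 2)]
  constructor
  · calc _ ≤ m ^ 2 / 2 / (6 * M ^ 2) * Jsq N x s := by gcongr
      _ = m ^ 2 / 2 * Jsq N x s / (6 * M ^ 2) := div_mul_eq_mul_div _ _ _
      _ ≤ tauEnergy N x κ s / (6 * M ^ 2) := by gcongr
      _ ≤ _ := hElow
  · calc _ ≤ tauEnergy N x κ s / (2 * m ^ 2) := hEup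
      _ ≤ lam ^ 2 * M ^ 2 / (1 + lam) * Jsq N x s / (2 * m ^ 2) := by gcongr
      _ = lam ^ 2 * M ^ 2 / (1 + lam) / (2 * m ^ 2) * Jsq N x s := (div_mul_eq_mul_div _ _ _).symm
      _ ≤ _ := by gcongr

/-- On a λ-quasi-uniform partition of `[0,1]`, for measurable `κ` with
`0 < m ≤ κ ≤ M` on `[0,1]`, the Babuška–Rheinboldt estimator
`E_h² = Σ_{j=1}^N ∫_{K_j} (ℓ_j/κ)²`, with `ℓ_j` affine, `ℓ_j(x_{j−1}) = τ_{j,1}` and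
`ℓ_j(x_j) = −τ_{j,0}`, satisfies
`(λ m²/(6(1+λ)³M²)) J(u_h)² ≤ E_h² ≤ (2λ²M²/(3(1+λ)m²)) J(u_h)²`. -/
theorem stmt0 (N : ℕ) (hN : 1 ≤ N) (x : ℕ → ℝ) (hx0 : x 0 = 0) (hxN : x N = 1)
    (hmono : ∀ i < N, x i < x (i + 1)) (lam : ℝ) (hlam : 1 < lam)
    (hquasi : ∀ j, 2 ≤ j → j ≤ N →
      1 / lam ≤ msize x j / msize x (j - 1) ∧ msize x j / msize x (j - 1) ≤ lam)
    (κ : ℝ → ℝ) (hκmeas : Measurable κ) (m M : ℝ) (hm : 0 < m)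
    (hκ : ∀ t ∈ Set.Icc (0 : ℝ) 1, m ≤ κ t ∧ κ t ≤ M)
    (u : ℝ → ℝ) (s : ℕ → ℝ) (hucont : ContinuousOn u (Set.Icc 0 1))
    (haff : ∀ j, 1 ≤ j → j ≤ N → ∀ t ∈ Set.Icc (x (j - 1)) (x j),
      u t = u (x (j - 1)) + s j * (t - x (j - 1)))
    (ℓ : ℕ → ℝ → ℝ) (hℓaff : ∀ j, ∃ c d : ℝ, ∀ t : ℝ, ℓ j t = c * t + d)
    (hℓval : ∀ j, 1 ≤ j → j ≤ N →
      ℓ j (x (j - 1)) = tauBR N x κ s j 1 ∧ ℓ j (x j) = -tauBR N x κ s j 0) :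
    lam * m ^ 2 / (6 * (1 + lam) ^ 3 * M ^ 2) * Jsq N x s ≤
      (∑ j ∈ Finset.Icc 1 N, ∫ t in (x (j - 1))..(x j), (ℓ j t / κ t) ^ 2) ∧
    (∑ j ∈ Finset.Icc 1 N, ∫ t in (x (j - 1))..(x j), (ℓ j t / κ t) ^ 2) ≤
      2 * lam ^ 2 * M ^ 2 / (3 * (1 + lam) * m ^ 2) * Jsq N x s :=
  stmt0_general N x hx0 hxN hmono lam hlam hquasi κ hκmeas m M hm hκ s ℓ hℓaff hℓval
end

section
/- Let a < b, r, r' > 0, and let u : ℝ → ℝ be continuous with u affine of slope s₋ on [a−r, a], affine of slope s on [a, b], and affine of slope s₊ on [b, b+r']. Let δ_a, δ_b ∈ ℝ be such that ã := a + δ_a ∈ (a−r, b), b̃ := b + δ_b ∈ (a, b+r'), and ã < b̃. Set s̃ = (u(b̃) − u(ã))/(b̃ − ã) and I = ∫_{(a,b) ∩ (ã,b̃)} (s̃ − s)² dx. Then: (i) if δ_a ≥ 0 and δ_b ≤ 0, then I = 0; (ii) if δ_a ≤ 0 and δ_b ≤ 0, then I = ((b̃ − a)/(b̃ − ã)²)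 δ_a² (s₋ − s)²; (iii) if δ_a ≥ 0 and δ_b ≥ 0, then I = ((b − ã)/(b̃ − ã)²) δ_b² (s − s₊)²; (iv) if δ_a ≤ 0 and δ_b ≥ 0, then I = ((b − a)/(b̃ − ã)²) ξ², where ξ = δ_a (s₋ − s) + δ_b (s − s₊). -/
open MeasureTheory

/-- Secant slope of `u` between `A` and `B`. -/
noncomputable def sec (u : ℝ → ℝ) (A B : ℝ) : ℝ := (u B - u A) / (B - A)

/-!
On the overlap of `(a, b)` with `(ã, b̃)` the integrand is constant, so `I` is the overlap length
times `(s̃ - s)²`. Writing `u` as the affine extension of its middle piece plus one hinge at each of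
`a` and `b`, the secant defect is `(b̃ - ã)(s̃ - s) = (s₊ - s) max(δ_b, 0) - (s₋ - s) min(δ_a, 0)`;
the four cases only decide which hinges are active and what the overlap is.
-/

lemma setIntegral_const_Ioo_inter_Ioo {a b c d : ℝ} (h : max a c ≤ min b d) (k : ℝ) :
    ∫ _ in Set.Ioo a b ∩ Set.Ioo c d, k = (min b d - max a c) * k := by
  rw [Set.Ioo_inter_Ioo, setIntegral_const, measureReal_def, Real.volume_Ioo,
    ENNReal.toReal_ofReal (sub_nonneg.2 h), smul_eq_mul]

section PiecewiseAffine

variable {u : ℝ → ℝ} {a b s : ℝ}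

lemma eq_add_hinge_left {l sm t : ℝ} (hab : a ≤ b)
    (haffm : ∀ t ∈ Set.Icc l a, u t = u a + sm * (t - a))
    (haff : ∀ t ∈ Set.Icc a b, u t = u a + s * (t - a)) (ht : t ∈ Set.Icc l b) :
    u t = u a + s * (t - a) + (sm - s) * min (t - a) 0 := by
  rcases le_total t a with hta | hat
  · rw [haffm t ⟨ht.1, hta⟩, min_eq_left (sub_nonpos.2 hta)]
    ring
  · rw [haff t ⟨hat, ht.2⟩, min_eq_right (sub_nonneg.2 hat)]
    ring

lemma eq_add_hinge_right {R sp t : ℝ} (hab : a ≤ b)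
    (haff : ∀ t ∈ Set.Icc a b, u t = u a + s * (t - a))
    (haffp : ∀ t ∈ Set.Icc b R, u t = u b + sp * (t - b)) (ht : t ∈ Set.Icc a R) :
    u t = u a + s * (t - a) + (sp - s) * max (t - b) 0 := by
  rcases le_total t b with htb | hbt
  · rw [haff t ⟨ht.1, htb⟩, max_eq_right (sub_nonpos.2 htb)]
    ring
  · rw [haffp t ⟨hbt, ht.2⟩, haff b ⟨hab, le_rfl⟩, max_eq_left (sub_nonneg.2 hbt)]
    ring

theorem integral_sq_sec_sub_slope {l R sm sp A B : ℝ} (hab : a ≤ b)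
    (haffm : ∀ t ∈ Set.Icc l a, u t = u a + sm * (t - a))
    (haff : ∀ t ∈ Set.Icc a b, u t = u a + s * (t - a))
    (haffp : ∀ t ∈ Set.Icc b R, u t = u b + sp * (t - b))
    (hA : A ∈ Set.Icc l b) (hB : B ∈ Set.Icc a R) (hAB : A < B) :
    ∫ _ in Set.Ioo a b ∩ Set.Ioo A B, (sec u A B - s) ^ 2 =
      (min b B - max a A) / (B - A) ^ 2 *
        ((sp - s) * max (B - b) 0 - (sm - s) * min (A - a) 0) ^ 2 := by
  have hsec : sec u A B - s =
      ((sp - s) * max (B - b) 0 - (sm - s) * min (A - a) 0) / (B - A) := by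
    rw [sec, eq_add_hinge_right hab haff haffp hB, eq_add_hinge_left hab haffm haff hA]
    field_simp [(sub_pos.2 hAB).ne']
    ring
  rw [setIntegral_const_Ioo_inter_Ioo (max_le_iff.2 ⟨le_min hab hB.1, le_min hA.2 hAB.le⟩), hsec, div_pow]
  ring

end PiecewiseAffine

theorem stmt9_general (a b r r' δa δb sm s sp : ℝ) (u : ℝ → ℝ)
    (hab : a < b)
    (haffm : ∀ t ∈ Set.Icc (a - r) a, u t = u a + sm * (t - a))
    (haff : ∀ t ∈ Set.Icc a b, u t = u a + s * (t - a))
    (haffp : ∀ t ∈ Set.Icc b (b + r'), u t = u b + sp * (t - b))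
    (hta1 : a - r < a + δa) (hta2 : a + δa < b)
    (htb1 : a < b + δb) (htb2 : b + δb < b + r')
    (hlt : a + δa < b + δb) :
    (0 ≤ δa → δb ≤ 0 →
      (∫ t in Set.Ioo a b ∩ Set.Ioo (a + δa) (b + δb),
        (sec u (a + δa) (b + δb) - s) ^ 2) = 0) ∧
    (δa ≤ 0 → δb ≤ 0 →
      (∫ t in Set.Ioo a b ∩ Set.Ioo (a + δa) (b + δb),
        (sec u (a + δa) (b + δb) - s) ^ 2) =
      (b + δb - a) / (b + δb - (a + δa)) ^ 2 * δa ^ 2 * (sm - s) ^ 2) ∧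
    (0 ≤ δa → 0 ≤ δb →
      (∫ t in Set.Ioo a b ∩ Set.Ioo (a + δa) (b + δb),
        (sec u (a + δa) (b + δb) - s) ^ 2) =
      (b - (a + δa)) / (b + δb - (a + δa)) ^ 2 * δb ^ 2 * (s - sp) ^ 2) ∧
    (δa ≤ 0 → 0 ≤ δb →
      (∫ t in Set.Ioo a b ∩ Set.Ioo (a + δa) (b + δb),
        (sec u (a + δa) (b + δb) - s) ^ 2) =
      (b - a) / (b + δb - (a + δa)) ^ 2 * (δa * (sm - s) + δb * (s - sp)) ^ 2) := by
  have hI := integral_sq_sec_sub_slope hab.le haffm haff haffp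
    ⟨hta1.le, hta2.le⟩ ⟨htb1.le, htb2.le⟩ hlt
  simp only [add_sub_cancel_left] at hI
  refine ⟨fun ha hb => ?_, fun ha hb => ?_, fun ha hb => ?_, fun ha hb => ?_⟩
  · rw [hI, max_eq_right hb, min_eq_right ha]
    ring
  · rw [hI, max_eq_right hb, min_eq_left ha, min_eq_right (by linarith), max_eq_left (by linarith)]
    ring
  · rw [hI, max_eq_left hb, min_eq_right ha, min_eq_left (by linarith), max_eq_right (by linarith)]
    ring
  · rw [hI, max_eq_left hb, min_eq_left ha, min_eq_left (by linarith), max_eq_left (by linarith)]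
    ring

/-- Case-by-case value of
`I = ∫_{(a,b) ∩ (ã,b̃)} (s̃ − s)² dx`, where `u` is continuous piecewise affine with slopes
`s₋, s, s₊` on `[a−r,a]`, `[a,b]`, `[b,b+r']`, `ã = a + δ_a`, `b̃ = b + δ_b`, and `s̃` is the
secant slope of `u` between `ã` and `b̃`. -/
theorem stmt9 (a b r r' δa δb sm s sp : ℝ) (u : ℝ → ℝ)
    (hr : 0 < r) (hr' : 0 < r') (hab : a < b) (hu : Continuous u)
    (haffm : ∀ t ∈ Set.Icc (a - r) a, u t = u a + sm * (t - a))
    (haff : ∀ t ∈ Set.Icc a b, u t = u a + s * (t - a))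
    (haffp : ∀ t ∈ Set.Icc b (b + r'), u t = u b + sp * (t - b))
    (hta1 : a - r < a + δa) (hta2 : a + δa < b)
    (htb1 : a < b + δb) (htb2 : b + δb < b + r')
    (hlt : a + δa < b + δb) :
    (0 ≤ δa → δb ≤ 0 →
      (∫ t in Set.Ioo a b ∩ Set.Ioo (a + δa) (b + δb),
        (sec u (a + δa) (b + δb) - s) ^ 2) = 0) ∧
    (δa ≤ 0 → δb ≤ 0 →
      (∫ t in Set.Ioo a b ∩ Set.Ioo (a + δa) (b + δb),
        (sec u (a + δa) (b + δb) - s) ^ 2) =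
      (b + δb - a) / (b + δb - (a + δa)) ^ 2 * δa ^ 2 * (sm - s) ^ 2) ∧
    (0 ≤ δa → 0 ≤ δb →
      (∫ t in Set.Ioo a b ∩ Set.Ioo (a + δa) (b + δb),
        (sec u (a + δa) (b + δb) - s) ^ 2) =
      (b - (a + δa)) / (b + δb - (a + δa)) ^ 2 * δb ^ 2 * (s - sp) ^ 2) ∧
    (δa ≤ 0 → 0 ≤ δb →
      (∫ t in Set.Ioo a b ∩ Set.Ioo (a + δa) (b + δb),
        (sec u (a + δa) (b + δb) - s) ^ 2) =
      (b - a) / (b + δb - (a + δa)) ^ 2 * (δa * (sm - s) + δb * (s - sp)) ^ 2) :=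
  stmt9_general a b r r' δa δb sm s sp u hab haffm haff haffp hta1 hta2 htb1 htb2 hlt
end

section
/- Let a < b, r, r' > 0, and let u : ℝ → ℝ be continuous with u affine of slope s₋ on [a−r, a], affine of slope s on [a, b], and affine of slope s₊ on [b, b+r']. Let δ_a, δ_b ∈ ℝ be such that ã := a + δ_a ∈ (a−r, b), b̃ := b + δ_b ∈ (a, b+r'), and ã < b̃. Set s̃ = (u(b̃) − u(ã))/(b̃ − ã), ξ = δ_a (s₋ − s) + δ_b (s − s₊), I₋ = ∫_{(a−r,a) ∩ (ã,b̃)} (s̃ − s₋)² dx, and I₊ = ∫_{(b,b+r') ∩ (ã,b̃)} (s̃ − s₊)² dx. Then: (i) if δ_a ≥ 0 then I₋ = 0, and if δ_b ≤ 0 then I₊ = 0; (ii) if δ_a ≤ 0 and δ_b ≤ 0, then I₋ = −δ_a (δ_a/(b̃ − ã) + 1)² (s₋ − s)²; (iii) if δ_a ≥ 0 and δ_b ≥ 0, then I₊ = δ_b (δ_b/(b̃ − ã) − 1)² (s − s₊)²; (iv) if δ_a ≤ 0 and δ_b ≥ 0, then I₋ = −δ_a (ξ/(b̃ − ã) + (s₋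 − s))² and I₊ = δ_b (ξ/(b̃ − ã) − (s − s₊))². -/
open MeasureTheory

/-!
Both integrands are constant, so `I₋` and `I₊` are the overlap lengths `max (-δa) 0` and
`max δb 0` times a square. Relative to the middle slope `s`, `u` is affine on `[a - r, b + r']`
up to the kinks `(s₋ - s) min (x - a) 0` and `(s₊ - s) max (x - b) 0`; hence
`s̃ = s - ξ' / (b̃ - ã)` with `ξ' = min δa 0 (s₋ - s) + max δb 0 (s - s₊)`, which in each sign
case is the `ξ` (or its surviving term) of the claimed formula.
-/

lemma sec_eq_add_div {u : ℝ → ℝ} {A B x₀ c s p q : ℝ} (hAB : A ≠ B)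
    (hA : u A = c + s * (A - x₀) + p) (hB : u B = c + s * (B - x₀) + q) :
    sec u A B = s + (q - p) / (B - A) := by
  have : B - A ≠ 0 := sub_ne_zero.2 hAB.symm
  rw [sec, hA, hB]
  field_simp
  ring

lemma setIntegral_Ioo_inter_Ioo_const (a₁ b₁ a₂ b₂ c : ℝ) :
    ∫ _ in Set.Ioo a₁ b₁ ∩ Set.Ioo a₂ b₂, c = max (min b₁ b₂ - max a₁ a₂) 0 * c := by
  rw [Set.Ioo_inter_Ioo, setIntegral_const, Real.volume_real_Ioo, smul_eq_mul]

section PiecewiseAffine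

variable {u : ℝ → ℝ} {a b x sm s sp : ℝ}

lemma eq_add_min_of_piecewise_affine_left {r : ℝ}
    (haffm : ∀ t ∈ Set.Icc (a - r) a, u t = u a + sm * (t - a))
    (haff : ∀ t ∈ Set.Icc a b, u t = u a + s * (t - a)) (hx : x ∈ Set.Icc (a - r) b) :
    u x = u a + s * (x - a) + (sm - s) * min (x - a) 0 := by
  rcases le_total x a with h | h
  · rw [haffm x ⟨hx.1, h⟩, min_eq_left (sub_nonpos.2 h)]
    ring
  · rw [haff x ⟨h, hx.2⟩, min_eq_right (sub_nonneg.2 h)]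
    ring

lemma eq_add_max_of_piecewise_affine_right {r' : ℝ} (hab : a ≤ b)
    (haff : ∀ t ∈ Set.Icc a b, u t = u a + s * (t - a))
    (haffp : ∀ t ∈ Set.Icc b (b + r'), u t = u b + sp * (t - b))
    (hx : x ∈ Set.Icc a (b + r')) :
    u x = u a + s * (x - a) + (sp - s) * max (x - b) 0 := by
  rcases le_total x b with h | h
  · rw [haff x ⟨hx.1, h⟩, max_eq_right (sub_nonpos.2 h)]
    ring
  · rw [haffp x ⟨h, hx.2⟩, haff b ⟨hab, le_rfl⟩, max_eq_left (sub_nonneg.2 h)]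
    ring

end PiecewiseAffine

theorem stmt10_general (a b r r' δa δb sm s sp : ℝ) (u : ℝ → ℝ) (hab : a < b)
    (haffm : ∀ t ∈ Set.Icc (a - r) a, u t = u a + sm * (t - a))
    (haff : ∀ t ∈ Set.Icc a b, u t = u a + s * (t - a))
    (haffp : ∀ t ∈ Set.Icc b (b + r'), u t = u b + sp * (t - b))
    (hta1 : a - r < a + δa) (hta2 : a + δa < b)
    (htb1 : a < b + δb) (htb2 : b + δb < b + r')
    (hlt : a + δa < b + δb) :
    (0 ≤ δa →
      (∫ t in Set.Ioo (a - r) a ∩ Set.Ioo (a + δa) (b + δb),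
        (sec u (a + δa) (b + δb) - sm) ^ 2) = 0) ∧
    (δb ≤ 0 →
      (∫ t in Set.Ioo b (b + r') ∩ Set.Ioo (a + δa) (b + δb),
        (sec u (a + δa) (b + δb) - sp) ^ 2) = 0) ∧
    (δa ≤ 0 → δb ≤ 0 →
      (∫ t in Set.Ioo (a - r) a ∩ Set.Ioo (a + δa) (b + δb),
        (sec u (a + δa) (b + δb) - sm) ^ 2) =
      -δa * (δa / (b + δb - (a + δa)) + 1) ^ 2 * (sm - s) ^ 2) ∧
    (0 ≤ δa → 0 ≤ δb →
      (∫ t in Set.Ioo b (b + r') ∩ Set.Ioo (a + δa) (b + δb),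
        (sec u (a + δa) (b + δb) - sp) ^ 2) =
      δb * (δb / (b + δb - (a + δa)) - 1) ^ 2 * (s - sp) ^ 2) ∧
    (δa ≤ 0 → 0 ≤ δb →
      (∫ t in Set.Ioo (a - r) a ∩ Set.Ioo (a + δa) (b + δb),
        (sec u (a + δa) (b + δb) - sm) ^ 2) =
      -δa * ((δa * (sm - s) + δb * (s - sp)) / (b + δb - (a + δa)) + (sm - s)) ^ 2 ∧
      (∫ t in Set.Ioo b (b + r') ∩ Set.Ioo (a + δa) (b + δb),
        (sec u (a + δa) (b + δb) - sp) ^ 2) =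
      δb * ((δa * (sm - s) + δb * (s - sp)) / (b + δb - (a + δa)) - (s - sp)) ^ 2) := by
  have hL : b + δb - (a + δa) ≠ 0 := by linarith
  have hsec : sec u (a + δa) (b + δb) =
      s + ((sp - s) * max δb 0 - (sm - s) * min δa 0) / (b + δb - (a + δa)) := by
    refine sec_eq_add_div hlt.ne
      (eq_add_min_of_piecewise_affine_left haffm haff ⟨hta1.le, hta2.le⟩)
      (eq_add_max_of_piecewise_affine_right hab.le haff haffp ⟨htb1.le, htb2.le⟩) |>.trans ?_
    simp only [add_sub_cancel_left]
  have hIm : ∫ _ in Set.Ioo (a - r) a ∩ Set.Ioo (a + δa) (b + δb),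
      (sec u (a + δa) (b + δb) - sm) ^ 2 = max (-δa) 0 * (sec u (a + δa) (b + δb) - sm) ^ 2 := by
    rw [setIntegral_Ioo_inter_Ioo_const, min_eq_left (by linarith), max_eq_right hta1.le, show a - (a + δa) = -δa by ring]
  have hIp : ∫ _ in Set.Ioo b (b + r') ∩ Set.Ioo (a + δa) (b + δb),
      (sec u (a + δa) (b + δb) - sp) ^ 2 = max δb 0 * (sec u (a + δa) (b + δb) - sp) ^ 2 := by
    rw [setIntegral_Ioo_inter_Ioo_const, min_eq_right htb2.le, max_eq_left hta2.le, add_sub_cancel_left]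
  rw [hIm, hIp, hsec]
  refine ⟨fun ha => ?_, fun hb => ?_, fun ha hb => ?_, fun ha hb => ?_, fun ha hb => ⟨?_, ?_⟩⟩
  · rw [max_eq_right (by linarith), zero_mul]
  · rw [max_eq_right hb, zero_mul]
  all_goals
    simp only [max_eq_left, max_eq_right, min_eq_left, min_eq_right, neg_nonneg, ha, hb]
    field_simp
    ring

/-- Case-by-case values of the neighbor contributions
`I₋ = ∫_{(a−r,a) ∩ (ã,b̃)} (s̃ − s₋)² dx` and `I₊ = ∫_{(b,b+r') ∩ (ã,b̃)} (s̃ − s₊)² dx`,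
where `u` is continuous piecewise affine with slopes `s₋, s, s₊` on `[a−r,a]`, `[a,b]`,
`[b,b+r']`, `ã = a + δ_a`, `b̃ = b + δ_b`, `s̃` is the secant slope of `u` between `ã` and
`b̃`, and `ξ = δ_a(s₋ − s) + δ_b(s − s₊)`. -/
theorem stmt10 (a b r r' δa δb sm s sp : ℝ) (u : ℝ → ℝ)
    (hr : 0 < r) (hr' : 0 < r') (hab : a < b) (hu : Continuous u)
    (haffm : ∀ t ∈ Set.Icc (a - r) a, u t = u a + sm * (t - a))
    (haff : ∀ t ∈ Set.Icc a b, u t = u a + s * (t - a))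
    (haffp : ∀ t ∈ Set.Icc b (b + r'), u t = u b + sp * (t - b))
    (hta1 : a - r < a + δa) (hta2 : a + δa < b)
    (htb1 : a < b + δb) (htb2 : b + δb < b + r')
    (hlt : a + δa < b + δb) :
    (0 ≤ δa →
      (∫ t in Set.Ioo (a - r) a ∩ Set.Ioo (a + δa) (b + δb),
        (sec u (a + δa) (b + δb) - sm) ^ 2) = 0) ∧
    (δb ≤ 0 →
      (∫ t in Set.Ioo b (b + r') ∩ Set.Ioo (a + δa) (b + δb),
        (sec u (a + δa) (b + δb) - sp) ^ 2) = 0) ∧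
    (δa ≤ 0 → δb ≤ 0 →
      (∫ t in Set.Ioo (a - r) a ∩ Set.Ioo (a + δa) (b + δb),
        (sec u (a + δa) (b + δb) - sm) ^ 2) =
      -δa * (δa / (b + δb - (a + δa)) + 1) ^ 2 * (sm - s) ^ 2) ∧
    (0 ≤ δa → 0 ≤ δb →
      (∫ t in Set.Ioo b (b + r') ∩ Set.Ioo (a + δa) (b + δb),
        (sec u (a + δa) (b + δb) - sp) ^ 2) =
      δb * (δb / (b + δb - (a + δa)) - 1) ^ 2 * (s - sp) ^ 2) ∧
    (δa ≤ 0 → 0 ≤ δb →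
      (∫ t in Set.Ioo (a - r) a ∩ Set.Ioo (a + δa) (b + δb),
        (sec u (a + δa) (b + δb) - sm) ^ 2) =
      -δa * ((δa * (sm - s) + δb * (s - sp)) / (b + δb - (a + δa)) + (sm - s)) ^ 2 ∧
      (∫ t in Set.Ioo b (b + r') ∩ Set.Ioo (a + δa) (b + δb),
        (sec u (a + δa) (b + δb) - sp) ^ 2) =
      δb * ((δa * (sm - s) + δb * (s - sp)) / (b + δb - (a + δa)) - (s - sp)) ^ 2) :=
  stmt10_general a b r r' δa δb sm s sp u hab haffm haff haffp hta1 hta2 htb1 htb2 hlt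
end
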